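/- Let V be a real vector space, a(·;·,·) linear in the first (tensor) argument and symmetric bilinear in the last two, l linear. Define ℒ(C,u) := 2 l(u) − a(C;u,u). Suppose (C^L, u^L) is a stationary point of ℒ, i.e. the directional derivative of ℒ at (C^L,u^L) in any direction (δC, δu) vanishes, and suppose u^S, C^S are arbitrary. Then, with e_C := C^L − C^S and e_u := u^L − u^S, ℒ(C^L,u^L) − ℒ(C^S,u^S) = ½ Dℒ(C^S,u^S)(e_C, e_u) + ½ a(e_C; e_u, e_u). -/

import Mathlib

/-! Along the segment s ↦ (C^S + s e_C, u^S + s e_u) the Lagrangian is a cubic polynomial φ in s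
with leading coefficient -a(e_C; e_u, e_u), and φ(1) = ℒ(C^L, u^L). For cubics the trapezoidal
rule φ(1) - φ(0) = ½ (φ'(0) + φ'(1)) holds up to the remainder -φ'''/12, and φ'(1) = 0 is the
stationarity of ℒ at (C^L, u^L) in the direction (e_C, e_u). -/

theorem deriv_cubic {φ : ℝ → ℝ} {c₀ c₁ c₂ c₃ : ℝ}
    (hφ : ∀ s, φ s = c₀ + c₁ * s + c₂ * s ^ 2 + c₃ * s ^ 3) (s : ℝ) :
    deriv φ s = c₁ + 2 * c₂ * s + 3 * c₃ * s ^ 2 := by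
  obtain rfl : φ = fun s => c₀ + c₁ * s + c₂ * s ^ 2 + c₃ * s ^ 3 := funext hφ
  refine HasDerivAt.deriv ?_
  convert (((hasDerivAt_const s c₀).add ((hasDerivAt_id' s).const_mul c₁)).add
    ((hasDerivAt_pow 2 s).const_mul c₂)).add ((hasDerivAt_pow 3 s).const_mul c₃) using 1
  · rfl
  · norm_num
    ring

theorem sub_eq_trapezoid_of_cubic {φ : ℝ → ℝ} {c₀ c₁ c₂ c₃ : ℝ}
    (hφ : ∀ s, φ s = c₀ + c₁ * s + c₂ * s ^ 2 + c₃ * s ^ 3) :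
    φ 1 - φ 0 = (deriv φ 0 + deriv φ 1) / 2 - c₃ / 2 := by
  rw [hφ, hφ, deriv_cubic hφ, deriv_cubic hφ]
  ring

theorem lagrangian_add_smul {V W : Type*} [AddCommGroup V] [Module ℝ V]
    [AddCommGroup W] [Module ℝ W] (a : W →ₗ[ℝ] V →ₗ[ℝ] V →ₗ[ℝ] ℝ) (l : V →ₗ[ℝ] ℝ)
    (C δC : W) (u δu : V) (s : ℝ) :
    2 * l (u + s • δu) - a (C + s • δC) (u + s • δu) (u + s • δu) =
      (2 * l u - a C u u) + (2 * l δu - a δC u u - a C u δu - a C δu u) * s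
        + -(a δC u δu + a δC δu u + a C δu δu) * s ^ 2 + -a δC δu δu * s ^ 3 := by
  simp only [map_add, map_smul, LinearMap.add_apply, LinearMap.smul_apply, smul_eq_mul]
  ring

theorem error_representation_general (V W : Type*) [AddCommGroup V] [Module ℝ V]
    [AddCommGroup W] [Module ℝ W]
    (a : W →ₗ[ℝ] V →ₗ[ℝ] V →ₗ[ℝ] ℝ)
    (l : V →ₗ[ℝ] ℝ)
    (L : W → V → ℝ) (hL : ∀ C u, L C u = 2 * l u - a C u u)
    (CL CS : W) (uL uS : V)
    (hstat : ∀ (δC : W) (δu : V),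
      deriv (fun s : ℝ => L (CL + s • δC) (uL + s • δu)) 0 = 0) :
    L CL uL - L CS uS =
      (1/2) * deriv (fun s : ℝ => L (CS + s • (CL - CS)) (uS + s • (uL - uS))) 0
      + (1/2) * a (CL - CS) (uL - uS) (uL - uS) := by
  set φ := fun s : ℝ => L (CS + s • (CL - CS)) (uS + s • (uL - uS))
  have hcubic : ∀ s, φ s = _ := fun s => (hL _ _).trans (lagrangian_add_smul a l CS _ uS _ s)
  have hφ_shift :
      (fun s => φ (1 + s)) = fun s => L (CL + s • (CL - CS)) (uL + s • (uL - uS)) := by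
    funext s
    simp only [φ, add_smul, one_smul, ← add_assoc, add_sub_cancel]
  have hφ1 : deriv φ 1 = 0 := by
    have h := deriv_comp_const_add φ 1 0
    rwa [hφ_shift, hstat, add_zero, eq_comm] at h
  have htrapezoid := sub_eq_trapezoid_of_cubic hcubic
  simp only [φ, one_smul, zero_smul, add_zero, add_sub_cancel] at htrapezoid
  rw [htrapezoid, hφ1]
  ring

/-- Abstract error representation (Theorem 3.1): at a stationary point of the Lagrangian
ℒ(C,u) = 2l(u) - a(C;u,u), the difference of Lagrangians equals half the directional
derivative at the approximate pair plus the remainder ½ a(e_C; e_u, e_u). -/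
theorem error_representation (V W : Type*) [AddCommGroup V] [Module ℝ V]
    [AddCommGroup W] [Module ℝ W]
    (a : W →ₗ[ℝ] V →ₗ[ℝ] V →ₗ[ℝ] ℝ) (hsymm : ∀ C u v, a C u v = a C v u)
    (l : V →ₗ[ℝ] ℝ)
    (L : W → V → ℝ) (hL : ∀ C u, L C u = 2 * l u - a C u u)
    (CL CS : W) (uL uS : V)
    (hstat : ∀ (δC : W) (δu : V),
      deriv (fun s : ℝ => L (CL + s • δC) (uL + s • δu)) 0 = 0) :
    L CL uL - L CS uS =
      (1/2) * deriv (fun s : ℝ => L (CS + s • (CL - CS)) (uS + s • (uL - uS))) 0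
      + (1/2) * a (CL - CS) (uL - uS) (uL - uS) :=
  error_representation_general V W a l L hL CL CS uL uS hstat
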